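/- Let h ∈ {1,…,n} be such that |λ_h|/κ(h) ≤ |λ_k|/κ(k) for all k = 1,…,n. Then with c = cos(hπ/(n+1)), δ* = 2(n c² δ − (n−1) c σ)/(n−1+2n c²), σ* = ((n−1)σ − n c δ)/(n−1+2n c²), the matrix S*^𝒯 = (n; δ*, σ*) attains the minimum of ‖T − S‖_F over all S ∈ 𝒮 ∩ 𝒯, and the structured distance to singularity of T is d_F^𝒯(T) = min_{S ∈ 𝒮 ∩ 𝒯} ‖T − S‖_F = |λ_h|/κ(h). -/

import Mathlib

open Real Filter

noncomputable def tridiag (n : ℕ) (d s : ℝ) : Matrix (Fin n) (Fin n) ℝ :=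
  Matrix.of fun i j =>
    if (i : ℕ) = (j : ℕ) then d
    else if (i : ℕ) + 1 = (j : ℕ) ∨ (j : ℕ) + 1 = (i : ℕ) then s else 0

noncomputable def lam (n : ℕ) (δ σ : ℝ) (h : ℕ) : ℝ :=
  δ + 2 * σ * Real.cos (h * Real.pi / (n + 1))

noncomputable def kap (n h : ℕ) : ℝ :=
  Real.sqrt (1 / (n : ℝ) + 2 / ((n : ℝ) - 1) * Real.cos (h * Real.pi / (n + 1)) ^ 2)

noncomputable def evec (n h : ℕ) : Fin n → ℝ :=
  fun k => Real.sqrt (2 / (n + 1)) * Real.sin (h * (k.1 + 1) * Real.pi / (n + 1))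

noncomputable def frobNorm {n : ℕ} (A : Matrix (Fin n) (Fin n) ℝ) : ℝ :=
  Real.sqrt (∑ i, ∑ j, A i j ^ 2)

/-! The sine vectors `evec n k` are eigenvectors of every matrix `(n; d, s)`, with eigenvalues
`lam n d s k`; for `(n; 0, 1)` these eigenvalues are distinct, so the `evec n k` form a basis and
`det (n; d, s) = ∏ₖ lam n d s k`. Hence `S = (n; d, s)` is singular iff `lam n d s k = 0` for some
`k`, and then, `lam` being linear in `(d, s)`,
`|lam n δ σ k| = |lam n (δ - d) (σ - s) k| ≤ kap n k * ‖T - S‖_F` by Cauchy–Schwarz, because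
`‖(n; a, b)‖_F² = n a² + 2 (n - 1) b²` and `kap n k² = 1 / n + 2 c² / (n - 1)` with `c = cos (k π / (n + 1))`. Equality holds when
`(δ - d, σ - s)` is proportional to `(n - 1, n c)`, which is the choice `(δ*, σ*)`. -/

open Matrix

lemma Fin.sum_ite_val_eq {M : Type*} [AddCommMonoid M] {n : ℕ} (m : ℕ) (x : M) :
    (∑ j : Fin n, if (j : ℕ) = m then x else 0) = if m < n then x else 0 := by
  simp only [Fin.sum_univ_eq_sum_range (fun j => if j = m then x else 0), Finset.sum_ite_eq',
    Finset.mem_range]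

-- Extending a vector by zeros at `0` and `n + 1` makes every row of `(n; d, s)` look alike.
lemma tridiag_mulVec_apply {n : ℕ} (d s : ℝ) (u : ℕ → ℝ) (h0 : u 0 = 0) (hn : u (n + 1) = 0)
    (i : Fin n) :
    (tridiag n d s *ᵥ fun j => u (j + 1)) i = s * u i + d * u (i + 1) + s * u (i + 2) := by
  have hentry : ∀ j : Fin n, tridiag n d s i j * u (j + 1) =
      (if (j : ℕ) = i - 1 then s * u i else 0) + (if (j : ℕ) = i then d * u (i + 1) else 0)
        + (if (j : ℕ) = i + 1 then s * u (i + 2) else 0) := by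
    intro j
    simp only [tridiag, Matrix.of_apply]
    split_ifs <;> grind
  simp only [Matrix.mulVec, dotProduct, hentry, Finset.sum_add_distrib, Fin.sum_ite_val_eq,
    if_pos (show (i : ℕ) - 1 < n by omega), if_pos i.2]
  split_ifs with hi
  · rfl
  · rw [show (i : ℕ) + 2 = n + 1 by omega, hn, mul_zero]

lemma tridiag_mulVec_evec (n k : ℕ) (d s : ℝ) :
    tridiag n d s *ᵥ evec n k = lam n d s k • evec n k := by
  set θ : ℝ := k * π / (n + 1)
  set u : ℕ → ℝ := fun m => √(2 / (n + 1)) * sin (m * θ)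
  have hu : evec n k = fun j : Fin n => u (j + 1) := by
    ext j
    simp only [evec, u, θ]
    push_cast
    ring_nf
  have hun : u (n + 1) = 0 := by
    have : ((n + 1 : ℕ) : ℝ) * θ = k * π := by
      simp only [θ]
      push_cast
      field_simp
    simp only [u, this, sin_nat_mul_pi, mul_zero]
  ext i
  rw [hu, tridiag_mulVec_apply d s u (by simp [u]) hun]
  have hrec : sin ((i : ℕ) * θ) + sin (((i : ℕ) + 2 : ℕ) * θ) =
      2 * cos θ * sin (((i : ℕ) + 1 : ℕ) * θ) := by
    have e1 : ((i : ℕ) : ℝ) * θ = ((i : ℕ) + 1 : ℕ) * θ - θ := by push_cast; ring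
    have e2 : (((i : ℕ) + 2 : ℕ) : ℝ) * θ = ((i : ℕ) + 1 : ℕ) * θ + θ := by push_cast; ring
    rw [e1, e2, sin_sub, sin_add]
    ring
  simp only [u, lam, Pi.smul_apply, smul_eq_mul]
  linear_combination s * √(2 / (n + 1)) * hrec

lemma succ_mul_pi_div_mem_Ioo {n : ℕ} (k : Fin n) :
    ((k + 1 : ℕ) : ℝ) * π / (n + 1) ∈ Set.Ioo 0 π := by
  have hk : ((k + 1 : ℕ) : ℝ) ≤ n := by exact_mod_cast k.2
  constructor
  · positivity
  · rw [div_lt_iff₀ (by positivity)]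
    nlinarith [pi_pos]

lemma evec_succ_ne_zero {n : ℕ} (k : Fin n) : evec n (k + 1) ≠ 0 := by
  have hpos : 0 < evec n (k + 1) ⟨0, k.pos⟩ := by
    have hsin := sin_pos_of_pos_of_lt_pi (succ_mul_pi_div_mem_Ioo k).1
      (succ_mul_pi_div_mem_Ioo k).2
    simp only [evec, Nat.cast_zero, zero_add, mul_one]
    positivity
  exact fun h => hpos.ne' (congrFun h _)

lemma cos_succ_mul_pi_div_injective (n : ℕ) :
    Function.Injective fun k : Fin n => cos (((k + 1 : ℕ) : ℝ) * π / (n + 1)) := by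
  intro k l hkl
  have h := injOn_cos (Set.Ioo_subset_Icc_self (succ_mul_pi_div_mem_Ioo k))
    (Set.Ioo_subset_Icc_self (succ_mul_pi_div_mem_Ioo l)) hkl
  rw [div_left_inj' (by positivity), mul_left_inj' pi_ne_zero, Nat.cast_inj] at h
  exact Fin.ext (by omega)

-- The `evec n k` do not depend on `(d, s)`, and `(n; 0, 1)` has simple spectrum.
lemma linearIndependent_evec (n : ℕ) : LinearIndependent ℝ fun k : Fin n => evec n (k + 1) := by
  refine Module.End.eigenvectors_linearIndependent' (toLin' (tridiag n 0 1))
    (fun k : Fin n => lam n 0 1 (k + 1)) ?_ _ fun k =>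
      ⟨Module.End.mem_eigenspace_iff.2 (tridiag_mulVec_evec n _ 0 1), evec_succ_ne_zero k⟩
  intro k l hkl
  exact cos_succ_mul_pi_div_injective n (by simpa [lam] using hkl)

lemma det_tridiag (n : ℕ) (d s : ℝ) :
    (tridiag n d s).det = ∏ k : Fin n, lam n d s (k + 1) := by
  set V : Matrix (Fin n) (Fin n) ℝ := of fun i k => evec n (k + 1) i
  have hV : IsUnit V.det := (isUnit_iff_isUnit_det V).1
    (linearIndependent_cols_iff_isUnit.1 (linearIndependent_evec n))
  have hdiag : tridiag n d s * V = V * diagonal fun k : Fin n => lam n d s (k + 1) := by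
    ext i k
    rw [mul_diagonal, mul_comm]
    exact congrFun (tridiag_mulVec_evec n (k + 1) d s) i
  have hdet := congrArg det hdiag
  rw [det_mul, det_mul, det_diagonal, mul_comm] at hdet
  exact hV.mul_left_cancel hdet

-- Squaring the entries of `(n; a, b)` gives `(n; a², b²)`, whose row sums are read off from
-- `tridiag_mulVec_apply` applied to the indicator of `[1, n]`.
lemma sum_sq_tridiag {n : ℕ} (hn : 0 < n) (a b : ℝ) :
    ∑ i, ∑ j, tridiag n a b i j ^ 2 = n * a ^ 2 + 2 * (n - 1) * b ^ 2 := by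
  obtain ⟨m, rfl⟩ : ∃ m, n = m + 1 := ⟨n - 1, by omega⟩
  set u : ℕ → ℝ := fun l => if 1 ≤ l ∧ l ≤ m + 1 then 1 else 0
  have hrow : ∀ i : Fin (m + 1), ∑ j, tridiag (m + 1) a b i j ^ 2 =
      b ^ 2 * u i + a ^ 2 + b ^ 2 * u (i + 2) := by
    intro i
    have hsq : ∀ j, tridiag (m + 1) a b i j ^ 2 =
        tridiag (m + 1) (a ^ 2) (b ^ 2) i j * u (j + 1) := by
      intro j
      simp only [tridiag, of_apply, u]
      split_ifs <;> first | omega | ring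
    simp only [hsq]
    exact (tridiag_mulVec_apply _ _ u (by simp [u]) (by simp [u]) i).trans
      (by simp [u, Fin.is_le i])
  have hfirst : ∑ i : Fin (m + 1), u i = m := by
    rw [Fin.sum_univ_succ]
    simp [u]
  have hlast : ∑ i : Fin (m + 1), u (i + 2) = m := by
    rw [Fin.sum_univ_castSucc]
    simp [u]
  simp only [hrow, Finset.sum_add_distrib, ← Finset.mul_sum, hfirst, hlast, Finset.sum_const,
    Finset.card_univ, Fintype.card_fin, nsmul_eq_mul]
  push_cast
  ring

lemma frobNorm_tridiag {n : ℕ} (hn : 0 < n) (a b : ℝ) :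
    frobNorm (tridiag n a b) = √(n * a ^ 2 + 2 * (n - 1) * b ^ 2) := by
  rw [frobNorm, sum_sq_tridiag hn]

lemma tridiag_sub_tridiag (n : ℕ) (a b d s : ℝ) :
    tridiag n a b - tridiag n d s = tridiag n (a - d) (b - s) := by
  ext i j
  simp only [Matrix.sub_apply, tridiag, of_apply]
  split_ifs <;> ring

lemma lam_sub_lam (n : ℕ) (a b d s : ℝ) (k : ℕ) :
    lam n a b k - lam n d s k = lam n (a - d) (b - s) k := by
  simp only [lam]
  ring

lemma kap_sq {n : ℕ} (hn : 2 ≤ n) (k : ℕ) :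
    kap n k ^ 2 = (n - 1 + 2 * n * cos (k * π / (n + 1)) ^ 2) / (n * (n - 1)) := by
  have hn1 : (0 : ℝ) < n - 1 := sub_pos.2 (by exact_mod_cast hn)
  rw [kap, sq_sqrt (by positivity)]
  field_simp

lemma kap_pos {n : ℕ} (hn : 2 ≤ n) (k : ℕ) : 0 < kap n k := by
  have hn1 : (0 : ℝ) < n - 1 := sub_pos.2 (by exact_mod_cast hn)
  exact sqrt_pos.2 (by positivity)

lemma abs_lam_le_kap_mul_frobNorm {n : ℕ} (hn : 2 ≤ n) (a b : ℝ) (k : ℕ) :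
    |lam n a b k| ≤ kap n k * frobNorm (tridiag n a b) := by
  have hn1 : (0 : ℝ) < n - 1 := sub_pos.2 (by exact_mod_cast hn)
  rw [lam]
  set c := cos (k * π / (n + 1))
  rw [frobNorm_tridiag (by omega), ← sqrt_sq (kap_pos hn k).le,
    ← sqrt_mul (sq_nonneg _), ← sqrt_sq_eq_abs, kap_sq hn]
  refine sqrt_le_sqrt (sub_nonneg.1 ?_)
  have hgap : (n - 1 + 2 * n * c ^ 2) / (n * (n - 1)) * (n * a ^ 2 + 2 * (n - 1) * b ^ 2)
      - (a + 2 * b * c) ^ 2 = 2 * ((n - 1) * b - n * c * a) ^ 2 / (n * (n - 1)) := by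
    field_simp
    ring
  rw [hgap]
  positivity

lemma abs_lam_div_kap_le_frobNorm_sub {n : ℕ} (hn : 2 ≤ n) (δ σ d s : ℝ) (k : ℕ)
    (hk : lam n d s k = 0) :
    |lam n δ σ k| / kap n k ≤ frobNorm (tridiag n δ σ - tridiag n d s) := by
  rw [div_le_iff₀ (kap_pos hn k), mul_comm, tridiag_sub_tridiag, ← sub_zero (lam n δ σ k), ← hk,
    lam_sub_lam]
  exact abs_lam_le_kap_mul_frobNorm hn _ _ k

lemma frobNorm_tridiag_eq_abs_div_kap {n : ℕ} (hn : 2 ≤ n) (k : ℕ) (c x : ℝ)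
    (hc : c = cos (k * π / (n + 1))) :
    frobNorm (tridiag n ((n - 1) * x / (n - 1 + 2 * n * c ^ 2))
      (n * c * x / (n - 1 + 2 * n * c ^ 2))) = |x| / kap n k := by
  rw [← abs_of_pos (kap_pos hn k), ← abs_div, ← sqrt_sq_eq_abs, frobNorm_tridiag (by omega),
    div_pow x, kap_sq hn, ← hc]
  congr 1
  field_simp

theorem stmt_7_general (n : ℕ) (hn : 2 ≤ n) (δ σ : ℝ)
    (h : ℕ) (h1 : 1 ≤ h) (hh : h ≤ n)
    (hmin : ∀ k : ℕ, 1 ≤ k → k ≤ n →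
      |lam n δ σ h| / kap n h ≤ |lam n δ σ k| / kap n k)
    (c δs σs : ℝ) (hc : c = Real.cos (h * Real.pi / (n + 1)))
    (hδs : δs = 2 * ((n : ℝ) * c ^ 2 * δ - ((n : ℝ) - 1) * c * σ) /
      ((n : ℝ) - 1 + 2 * (n : ℝ) * c ^ 2))
    (hσs : σs = (((n : ℝ) - 1) * σ - (n : ℝ) * c * δ) /
      ((n : ℝ) - 1 + 2 * (n : ℝ) * c ^ 2)) :
    (tridiag n δs σs).det = 0 ∧
    frobNorm (tridiag n δ σ - tridiag n δs σs) = |lam n δ σ h| / kap n h ∧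
    IsLeast {r : ℝ | ∃ S : Matrix (Fin n) (Fin n) ℝ,
        S.det = 0 ∧ (∃ d s : ℝ, S = tridiag n d s) ∧ r = frobNorm (tridiag n δ σ - S)}
      (|lam n δ σ h| / kap n h) := by
  have hD : 0 < (n : ℝ) - 1 + 2 * n * c ^ 2 := by
    have hn1 : (0 : ℝ) < n - 1 := sub_pos.2 (by exact_mod_cast hn)
    positivity
  have hlam : lam n δ σ h = δ + 2 * σ * c := by rw [lam, hc]
  have hsing : (tridiag n δs σs).det = 0 := by
    rw [det_tridiag]
    refine Finset.prod_eq_zero (Finset.mem_univ ⟨h - 1, by omega⟩) ?_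
    rw [Nat.sub_add_cancel h1, lam, ← hc, hδs, hσs]
    field_simp
    ring
  have hdist : frobNorm (tridiag n δ σ - tridiag n δs σs) = |lam n δ σ h| / kap n h := by
    rw [← frobNorm_tridiag_eq_abs_div_kap hn h c _ hc, tridiag_sub_tridiag, hlam, hδs, hσs]
    congr 2 <;> rw [eq_div_iff hD.ne', sub_mul, div_mul_cancel₀ _ hD.ne'] <;> ring
  refine ⟨hsing, hdist, ⟨_, hsing, ⟨δs, σs, rfl⟩, hdist.symm⟩, ?_⟩
  rintro r ⟨S, hS, ⟨d, s, rfl⟩, rfl⟩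
  obtain ⟨k, -, hk⟩ := Finset.prod_eq_zero_iff.1 (det_tridiag n d s ▸ hS)
  exact (hmin _ (by omega) k.2).trans (abs_lam_div_kap_le_frobNorm_sub hn δ σ d s _ hk)

/-- if `h` minimizes `|λ_k|/κ(k)`, then `S*^𝒯 = (n; δ*, σ*)` attains the minimum of
`‖T − S‖_F` over singular symmetric tridiagonal Toeplitz matrices `S`, and the structured distance
to singularity is `d_F^𝒯(T) = |λ_h|/κ(h)`. -/
theorem stmt_7 (n : ℕ) (hn : 2 ≤ n) (δ σ : ℝ) (hσ : σ ≠ 0)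
    (h : ℕ) (h1 : 1 ≤ h) (hh : h ≤ n)
    (hmin : ∀ k : ℕ, 1 ≤ k → k ≤ n →
      |lam n δ σ h| / kap n h ≤ |lam n δ σ k| / kap n k)
    (c δs σs : ℝ) (hc : c = Real.cos (h * Real.pi / (n + 1)))
    (hδs : δs = 2 * ((n : ℝ) * c ^ 2 * δ - ((n : ℝ) - 1) * c * σ) /
      ((n : ℝ) - 1 + 2 * (n : ℝ) * c ^ 2))
    (hσs : σs = (((n : ℝ) - 1) * σ - (n : ℝ) * c * δ) /
      ((n : ℝ) - 1 + 2 * (n : ℝ) * c ^ 2)) :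
    (tridiag n δs σs).det = 0 ∧
    frobNorm (tridiag n δ σ - tridiag n δs σs) = |lam n δ σ h| / kap n h ∧
    IsLeast {r : ℝ | ∃ S : Matrix (Fin n) (Fin n) ℝ,
        S.det = 0 ∧ (∃ d s : ℝ, S = tridiag n d s) ∧ r = frobNorm (tridiag n δ σ - S)}
      (|lam n δ σ h| / kap n h) :=
  stmt_7_general n hn δ σ h h1 hh hmin c δs σs hc hδs hσs
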